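/- Let X be a real-valued Lévy process with generating triplet (γ, b², ν) with b > 0, and let t > 0. Then for all ε ∈ (0,1], sup_{x∈ℝ} |P[X_t ≥ x] − P[X^ε_t ≥ x]| ≤ σ(ε) / (√(2π) b). -/

import Mathlib

open MeasureTheory ProbabilityTheory Filter Asymptotics

noncomputable section

namespace LevyApprox

variable {Ω : Type*} [MeasurableSpace Ω]

/-- A càdlàg process started at `0` with stationary and independent increments,
i.e. a Lévy process. -/
structure IsLevyProcess (P : Measure Ω) (X : ℝ → Ω → ℝ) : Prop where
  meas : ∀ t : ℝ, Measurable (X t)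
  init : ∀ᵐ ω ∂P, X 0 ω = 0
  rightCont : ∀ᵐ ω ∂P, ∀ t : ℝ, 0 ≤ t →
    ContinuousWithinAt (fun s => X s ω) (Set.Ici t) t
  leftLim : ∀ᵐ ω ∂P, ∀ t : ℝ, 0 < t →
    ∃ l : ℝ, Tendsto (fun s => X s ω) (nhdsWithin t (Set.Iio t)) (nhds l)
  stationary : ∀ s t : ℝ, 0 ≤ s → s ≤ t →
    Measure.map (fun ω => X t ω - X s ω) P = Measure.map (fun ω => X (t - s) ω) P
  indepIncr : ∀ s t : ℝ, 0 ≤ s → s ≤ t →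
    IndepFun (fun ω => X t ω - X s ω) (fun ω => fun u : Set.Icc (0:ℝ) s => X (u : ℝ) ω) P

/-- `ν` is a Lévy measure on `ℝ`: no atom at `0` and `∫ min(x², 1) ν(dx) < ∞`. -/
structure IsLevyMeasure (ν : Measure ℝ) : Prop where
  noAtom : ν {0} = 0
  finiteMin : ∫⁻ x : ℝ, ENNReal.ofReal (min (x ^ 2) 1) ∂ν < ⊤

/-- The characteristic (Lévy) exponent of the generating triplet `(γ, b², ν)`. -/
def levyExponent (γ b : ℝ) (ν : Measure ℝ) (u : ℝ) : ℂ :=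
  ((γ * u : ℝ) : ℂ) * Complex.I - ((b ^ 2 * u ^ 2 / 2 : ℝ) : ℂ) +
    ∫ x : ℝ, (Complex.exp (Complex.I * ((u * x : ℝ) : ℂ)) - 1 -
      (if |x| ≤ 1 then ((u * x : ℝ) : ℂ) * Complex.I else 0)) ∂ν

/-- The characteristic exponent of `X^ε`, obtained from `X` by removing the
compensated jumps of absolute size at most `ε`. -/
def truncExponent (γ b : ℝ) (ν : Measure ℝ) (ε : ℝ) (u : ℝ) : ℂ :=
  ((γ * u : ℝ) : ℂ) * Complex.I - ((b ^ 2 * u ^ 2 / 2 : ℝ) : ℂ) +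
    ∫ x : ℝ in {x : ℝ | ε < |x|}, (Complex.exp (Complex.I * ((u * x : ℝ) : ℂ)) - 1 -
      (if |x| ≤ 1 then ((u * x : ℝ) : ℂ) * Complex.I else 0)) ∂ν

/-- The characteristic exponent of `R^ε = X - X^ε`, the compensated sum of
jumps of absolute size at most `ε`. -/
def smallExponent (ν : Measure ℝ) (ε : ℝ) (u : ℝ) : ℂ :=
  ∫ x : ℝ in {x : ℝ | |x| ≤ ε}, (Complex.exp (Complex.I * ((u * x : ℝ) : ℂ)) - 1 -
    ((u * x : ℝ) : ℂ) * Complex.I) ∂ν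

/-- The process `X` has characteristic exponent `ψ` under `P`:
`E[exp(i u X_t)] = exp(t ψ(u))` for all `t ≥ 0`. -/
def HasCharExponent (P : Measure Ω) (X : ℝ → Ω → ℝ) (ψ : ℝ → ℂ) : Prop :=
  ∀ t : ℝ, 0 ≤ t → ∀ u : ℝ,
    ∫ ω, Complex.exp (Complex.I * ((u * X t ω : ℝ) : ℂ)) ∂P = Complex.exp ((t : ℂ) * ψ u)

/-- `σ(ε) = (∫_{|x| ≤ ε} x² ν(dx))^{1/2}`. -/
def sigmaFn (ν : Measure ℝ) (ε : ℝ) : ℝ :=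
  Real.sqrt (∫ x : ℝ in {x : ℝ | |x| ≤ ε}, x ^ 2 ∂ν)

/-- `σ₀(ε) = max (σ(ε), ε)`. -/
def sigma0 (ν : Measure ℝ) (ε : ℝ) : ℝ := max (sigmaFn ν ε) ε

/-- The running supremum `M_t = sup_{0 ≤ s ≤ t} X_s`. -/
def runSup (X : ℝ → Ω → ℝ) (t : ℝ) (ω : Ω) : ℝ :=
  ⨆ s : Set.Icc (0:ℝ) t, X (s : ℝ) ω

/-- A standard Brownian motion: continuous paths started at `0`, Gaussian
stationary increments independent of the past. -/
structure IsStdBrownian (P : Measure Ω) (W : ℝ → Ω → ℝ) : Prop where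
  meas : ∀ t : ℝ, Measurable (W t)
  init : ∀ᵐ ω ∂P, W 0 ω = 0
  cont : ∀ᵐ ω ∂P, Continuous fun t => W t ω
  gauss : ∀ s t : ℝ, 0 ≤ s → s ≤ t →
    Measure.map (fun ω => W t ω - W s ω) P = gaussianReal 0 (Real.toNNReal (t - s))
  indepIncr : ∀ s t : ℝ, 0 ≤ s → s ≤ t →
    IndepFun (fun ω => W t ω - W s ω) (fun ω => fun u : Set.Icc (0:ℝ) s => W (u : ℝ) ω) P

/-- `β(ε) = σ₀(ε)⁻⁴ ∫_{|x| ≤ ε} x⁴ ν(dx)`. -/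
def betaFn (ν : Measure ℝ) (ε : ℝ) : ℝ :=
  (∫ x : ℝ in {x : ℝ | |x| ≤ ε}, x ^ 4 ∂ν) / sigma0 ν ε ^ 4

/-- `β₁ᵗ(ε) = β(ε)^{1/6} (√(log(t/β(ε)^{1/3} + 3)) + 1)`. -/
def beta1 (ν : Measure ℝ) (t ε : ℝ) : ℝ :=
  betaFn ν ε ^ ((1 : ℝ)/6) *
    (Real.sqrt (Real.log (t / betaFn ν ε ^ ((1 : ℝ)/3) + 3)) + 1)

/-- `β_{p,θ}ᵗ(ε) = β(ε)^{pθ/(p+4θ)} [(log(t/β(ε)^{pθ/(p+4θ)} + 3))^p + 1]`. -/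
def betaP (ν : Measure ℝ) (t p θ ε : ℝ) : ℝ :=
  betaFn ν ε ^ (p * θ / (p + 4 * θ)) *
    ((Real.log (t / betaFn ν ε ^ (p * θ / (p + 4 * θ)) + 3)) ^ p + 1)

/-- `ρ(ε) = σ(ε)⁻³ ∫_{|x| ≤ ε} |x|³ ν(dx)`. -/
def rhoFn (ν : Measure ℝ) (ε : ℝ) : ℝ :=
  (∫ x : ℝ in {x : ℝ | |x| ≤ ε}, |x| ^ 3 ∂ν) / sigmaFn ν ε ^ 3

/-!
Write `X_t = b B_t + V + R` and `X^ε_t = b B_t + V` with `R = X_t - X^ε_t`, where `b B_t` is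
independent of `(V, R)`. Conditioning on `(V, R)`, both probabilities are expectations of the
Gaussian tail `y ↦ P[b B_t ≥ y]`, which is Lipschitz with constant `1 / √(2π b² t)` (the maximum
of the Gaussian density). Hence their difference is at most `E|R| / √(2π b² t)`, and
`E|R| ≤ √(E R²) ≤ σ(ε) √t`. The second moment of `R` is read off its characteristic exponent:
`1 - E cos (u R) ≤ t σ(ε)² u² / 2 + O(u⁶)`, and Fatou's lemma applied to
`2 (1 - cos (u R)) / u² → R²` as `u → 0` gives `E R² ≤ t σ(ε)²`.
-/

open scoped NNReal Topology

lemma sq_mul_sinc_sq_eq {u : ℝ} (hu : u ≠ 0) (y : ℝ) :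
    y ^ 2 * Real.sinc (u * y / 2) ^ 2 = 2 * (1 - Real.cos (u * y)) / u ^ 2 := by
  rcases eq_or_ne y 0 with rfl | hy
  · simp
  have hcos : Real.cos (u * y) = 1 - 2 * Real.sin (u * y / 2) ^ 2 := by
    rw [show u * y = 2 * (u * y / 2) by ring, Real.cos_two_mul, Real.cos_sq']; ring_nf
  rw [Real.sinc_of_ne_zero (by positivity), hcos]
  field_simp
  ring

theorem lintegral_sq_le_of_one_sub_integral_cos_le {P : Measure Ω} [IsProbabilityMeasure P]
    {R : Ω → ℝ} (hR : Measurable R) {c : ℝ} {r : ℝ → ℝ}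
    (hr : r =o[𝓝[≠] 0] fun u => u ^ 2)
    (hle : ∀ᶠ u in 𝓝[≠] 0, 1 - ∫ ω, Real.cos (u * R ω) ∂P ≤ c * u ^ 2 / 2 + r u) :
    ∫⁻ ω, ENNReal.ofReal (R ω ^ 2) ∂P ≤ ENNReal.ofReal c := by
  set f : ℝ → Ω → ℝ := fun u ω => R ω ^ 2 * Real.sinc (u * R ω / 2) ^ 2
  have hlim (ω : Ω) : Tendsto (fun u => f u ω) (𝓝[≠] 0) (𝓝 (R ω ^ 2)) := by
    have hcont : Continuous fun u => R ω ^ 2 * Real.sinc (u * R ω / 2) ^ 2 := by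
      fun_prop
    simpa [Real.sinc_zero] using (hcont.tendsto 0).mono_left nhdsWithin_le_nhds
  have hf_integral {u : ℝ} (hu : u ≠ 0) :
      ∫⁻ ω, ENNReal.ofReal (f u ω) ∂P
        = ENNReal.ofReal (2 * (1 - ∫ ω, Real.cos (u * R ω) ∂P) / u ^ 2) := by
    have hcos_int : Integrable (fun ω => Real.cos (u * R ω)) P :=
      Integrable.of_bound (by fun_prop) 1 (ae_of_all _ fun ω => Real.abs_cos_le_one _)
    have hint : Integrable (fun ω => 2 * (1 - Real.cos (u * R ω)) / u ^ 2) P :=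
      (((integrable_const 1).sub hcos_int).const_mul 2).div_const _
    simp only [f, sq_mul_sinc_sq_eq hu]
    rw [← ofReal_integral_eq_lintegral_ofReal hint (ae_of_all _ fun ω => by
        have := sub_nonneg.2 (Real.cos_le_one (u * R ω)); positivity),
      integral_div, integral_const_mul, integral_sub (integrable_const 1) hcos_int]
    simp
  have hbound : Tendsto (fun u => ENNReal.ofReal (c + 2 * (r u / u ^ 2))) (𝓝[≠] 0)
      (𝓝 (ENNReal.ofReal c)) := by
    have h : Tendsto (fun u => c + 2 * (r u / u ^ 2)) (𝓝[≠] 0) (𝓝 c) := by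
      simpa using (hr.tendsto_div_nhds_zero.const_mul 2).const_add c
    exact (ENNReal.continuous_ofReal.tendsto c).comp h
  calc ∫⁻ ω, ENNReal.ofReal (R ω ^ 2) ∂P
      = ∫⁻ ω, liminf (fun u => ENNReal.ofReal (f u ω)) (𝓝[≠] 0) ∂P :=
        lintegral_congr fun ω =>
          (((ENNReal.continuous_ofReal.tendsto _).comp (hlim ω)).liminf_eq).symm
    _ ≤ liminf (fun u => ∫⁻ ω, ENNReal.ofReal (f u ω) ∂P) (𝓝[≠] 0) :=
        lintegral_liminf_le fun u => by fun_prop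
    _ ≤ liminf (fun u => ENNReal.ofReal (c + 2 * (r u / u ^ 2))) (𝓝[≠] 0) := by
        refine liminf_le_liminf ?_
        filter_upwards [hle, self_mem_nhdsWithin] with u hu (hu0 : u ≠ 0)
        rw [hf_integral hu0]
        refine ENNReal.ofReal_le_ofReal ?_
        have hu2 : 0 < u ^ 2 := by positivity
        rw [div_le_iff₀ hu2, add_mul, mul_assoc, div_mul_cancel₀ _ hu2.ne']
        linarith
    _ = ENNReal.ofReal c := hbound.liminf_eq

section SmallJumps

variable {ν : Measure ℝ} {ε : ℝ}

lemma measurableSet_abs_le (ε : ℝ) : MeasurableSet {x : ℝ | |x| ≤ ε} :=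
  measurableSet_le (by fun_prop) measurable_const

lemma IsLevyMeasure.integrableOn_sq (hν : IsLevyMeasure ν) (hε : ε ≤ 1) :
    IntegrableOn (fun x : ℝ => x ^ 2) {x | |x| ≤ ε} ν := by
  have hmin : Integrable (fun x : ℝ => min (x ^ 2) 1) ν :=
    (lintegral_ofReal_ne_top_iff_integrable (by fun_prop)
      (ae_of_all _ fun x => by positivity)).1 hν.finiteMin.ne
  refine hmin.integrableOn.congr_fun (fun x (hx : |x| ≤ ε) => min_eq_left ?_)
    (measurableSet_abs_le ε)
  exact (sq_le_one_iff_abs_le_one x).2 (hx.trans hε)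

lemma sigmaFn_sq (ν : Measure ℝ) (ε : ℝ) :
    sigmaFn ν ε ^ 2 = ∫ x in {x : ℝ | |x| ≤ ε}, x ^ 2 ∂ν :=
  Real.sq_sqrt (integral_nonneg fun x => sq_nonneg x)

lemma abs_cos_sub_one_le (y : ℝ) : |Real.cos y - 1| ≤ y ^ 2 / 2 := by
  rw [abs_of_nonpos (sub_nonpos.2 (Real.cos_le_one y))]
  linarith [Real.one_sub_sq_div_two_le_cos (x := y)]

lemma abs_sin_mul_sub_mul_le {x : ℝ} (hx : |x| ≤ 1) (u : ℝ) :
    |Real.sin (u * x) - u * x| ≤ |u| ^ 3 / 6 * x ^ 2 := by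
  rw [abs_sub_comm]
  calc |u * x - Real.sin (u * x)| ≤ |u * x| ^ 3 / 6 := Real.abs_sub_sin_le _
    _ = |u| ^ 3 / 6 * (|x| * x ^ 2) := by rw [abs_mul, ← sq_abs x]; ring
    _ ≤ |u| ^ 3 / 6 * x ^ 2 := by
        gcongr
        exact mul_le_of_le_one_left (sq_nonneg x) hx

lemma smallExponent_eq (hν : IsLevyMeasure ν) (hε : ε ≤ 1) (u : ℝ) :
    smallExponent ν ε u =
      ((∫ x in {x : ℝ | |x| ≤ ε}, (Real.cos (u * x) - 1) ∂ν : ℝ) : ℂ) +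
        ((∫ x in {x : ℝ | |x| ≤ ε}, (Real.sin (u * x) - u * x) ∂ν : ℝ) : ℂ) * Complex.I := by
  have hsq := hν.integrableOn_sq hε
  have hre : IntegrableOn (fun x => Real.cos (u * x) - 1) {x | |x| ≤ ε} ν :=
    Integrable.mono' (hsq.const_mul (u ^ 2 / 2)) (by fun_prop) <|
      ae_of_all _ fun x => (abs_cos_sub_one_le _).trans_eq (by ring)
  have him : IntegrableOn (fun x => Real.sin (u * x) - u * x) {x | |x| ≤ ε} ν :=
    Integrable.mono' (hsq.const_mul (|u| ^ 3 / 6)) (by fun_prop) <|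
      (ae_restrict_iff' (measurableSet_abs_le ε)).2 <| ae_of_all _ fun x (hx : |x| ≤ ε) =>
        abs_sin_mul_sub_mul_le (hx.trans hε) u
  have hpt (x : ℝ) : Complex.exp (Complex.I * ((u * x : ℝ) : ℂ)) - 1 - ((u * x : ℝ) : ℂ) * Complex.I
      = ((Real.cos (u * x) - 1 : ℝ) : ℂ) + ((Real.sin (u * x) - u * x : ℝ) : ℂ) * Complex.I := by
    rw [mul_comm, Complex.exp_mul_I, ← Complex.ofReal_cos, ← Complex.ofReal_sin]
    push_cast
    ring
  simp_rw [smallExponent, hpt]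
  rw [integral_add hre.ofReal (him.ofReal.mul_const _), integral_mul_const,
    integral_complex_ofReal, integral_complex_ofReal]

lemma re_smallExponent_nonpos (hν : IsLevyMeasure ν) (hε : ε ≤ 1) (u : ℝ) :
    (smallExponent ν ε u).re ≤ 0 := by
  simpa [smallExponent_eq hν hε] using
    integral_nonpos fun x => sub_nonpos.2 (Real.cos_le_one (u * x))

lemma neg_re_smallExponent_le (hν : IsLevyMeasure ν) (hε : ε ≤ 1) (u : ℝ) :
    -(smallExponent ν ε u).re ≤ u ^ 2 * sigmaFn ν ε ^ 2 / 2 := by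
  have hre : -(smallExponent ν ε u).re
      = ∫ x in {x : ℝ | |x| ≤ ε}, (1 - Real.cos (u * x)) ∂ν := by
    simp [smallExponent_eq hν hε, ← integral_neg]
  rw [hre, sigmaFn_sq, ← integral_const_mul, ← integral_div]
  refine integral_mono_of_nonneg (ae_of_all _ fun x => sub_nonneg.2 (Real.cos_le_one _))
    (((hν.integrableOn_sq hε).const_mul _).div_const _) (ae_of_all _ fun x => ?_)
  linarith [Real.one_sub_sq_div_two_le_cos (x := u * x), mul_pow u x 2]

lemma abs_im_smallExponent_le (hν : IsLevyMeasure ν) (hε : ε ≤ 1) (u : ℝ) :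
    |(smallExponent ν ε u).im| ≤ |u| ^ 3 * sigmaFn ν ε ^ 2 / 6 := by
  have him : (smallExponent ν ε u).im
      = ∫ x in {x : ℝ | |x| ≤ ε}, (Real.sin (u * x) - u * x) ∂ν := by
    simp [smallExponent_eq hν hε]
  rw [him, sigmaFn_sq, mul_div_right_comm, ← integral_const_mul, ← Real.norm_eq_abs]
  refine norm_integral_le_of_norm_le ((hν.integrableOn_sq hε).const_mul _) ?_
  filter_upwards [ae_restrict_mem (measurableSet_abs_le ε)] with x (hx : |x| ≤ ε)
  exact (Real.norm_eq_abs _).trans_le (abs_sin_mul_sub_mul_le (hx.trans hε) u)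

end SmallJumps

lemma one_sub_re_exp_le {z : ℂ} (hz : z.re ≤ 0) :
    1 - (Complex.exp z).re ≤ -z.re + z.im ^ 2 / 2 := by
  rw [Complex.exp_re]
  have h_exp_le : Real.exp z.re ≤ 1 := Real.exp_le_one_iff.2 hz
  have h_one_sub_cos : 0 ≤ 1 - Real.cos z.im := sub_nonneg.2 (Real.cos_le_one _)
  nlinarith [Real.add_one_le_exp z.re, Real.one_sub_sq_div_two_le_cos (x := z.im),
    Real.exp_pos z.re]

lemma integral_cos_mul_eq_re {P : Measure Ω} [IsFiniteMeasure P] {R : Ω → ℝ}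
    (hR : Measurable R) (u : ℝ) :
    ∫ ω, Real.cos (u * R ω) ∂P = (∫ ω, Complex.exp (Complex.I * ((u * R ω : ℝ) : ℂ)) ∂P).re := by
  have hint : Integrable (fun ω => Complex.exp (Complex.I * ((u * R ω : ℝ) : ℂ))) P := by
    refine Integrable.of_bound (by fun_prop) 1 (ae_of_all _ fun ω => ?_)
    rw [mul_comm, Complex.norm_exp_ofReal_mul_I]
  rw [← RCLike.re_eq_complex_re, ← integral_re hint]
  congr 1 with ω
  rw [RCLike.re_eq_complex_re, mul_comm Complex.I, Complex.exp_ofReal_mul_I_re]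

theorem lintegral_sq_le_of_integral_exp_eq_smallExponent {P : Measure Ω} [IsProbabilityMeasure P]
    {ν : Measure ℝ} (hν : IsLevyMeasure ν) {ε : ℝ} (hε : ε ≤ 1) {R : Ω → ℝ} (hR : Measurable R)
    {t : ℝ} (ht : 0 ≤ t)
    (hchar : ∀ u : ℝ, ∫ ω, Complex.exp (Complex.I * ((u * R ω : ℝ) : ℂ)) ∂P
      = Complex.exp ((t : ℂ) * smallExponent ν ε u)) :
    ∫⁻ ω, ENNReal.ofReal (R ω ^ 2) ∂P ≤ ENNReal.ofReal (t * sigmaFn ν ε ^ 2) := by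
  -- `r u` bounds `(t Im ψ(u))² / 2 ≤ t² (|u|³ σ² / 6)² / 2`.
  refine lintegral_sq_le_of_one_sub_integral_cos_le hR
    (r := fun u => t ^ 2 * sigmaFn ν ε ^ 4 / 72 * u ^ 6)
    (((isLittleO_pow_pow (by norm_num : 2 < 6)).const_mul_left _).mono nhdsWithin_le_nhds)
    (Eventually.of_forall fun u => ?_)
  have hre := neg_re_smallExponent_le hν hε u
  have him : (smallExponent ν ε u).im ^ 2 ≤ (|u| ^ 3 * sigmaFn ν ε ^ 2 / 6) ^ 2 :=
    sq_le_sq' (abs_le.1 (abs_im_smallExponent_le hν hε u)).1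
      (abs_le.1 (abs_im_smallExponent_le hν hε u)).2
  have hu6 : (|u| ^ 3) ^ 2 = u ^ 6 := by
    rw [← pow_mul, show 3 * 2 = 6 from rfl, Even.pow_abs ⟨3, rfl⟩]
  rw [integral_cos_mul_eq_re hR, hchar]
  refine (one_sub_re_exp_le ?_).trans ?_
  · simpa using mul_nonpos_of_nonneg_of_nonpos ht (re_smallExponent_nonpos hν hε u)
  · simp only [Complex.re_ofReal_mul, Complex.im_ofReal_mul]
    have h_re := mul_le_mul_of_nonneg_left hre ht
    have h_im := mul_le_mul_of_nonneg_left him (sq_nonneg t)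
    rw [div_pow, mul_pow, hu6] at h_im
    nlinarith

lemma memLp_two_of_lintegral_sq_le {P : Measure Ω} {R : Ω → ℝ} (hR : AEStronglyMeasurable R P)
    {c : ℝ} (h : ∫⁻ ω, ENNReal.ofReal (R ω ^ 2) ∂P ≤ ENNReal.ofReal c) : MemLp R 2 P :=
  (memLp_two_iff_integrable_sq hR).2 <|
    (lintegral_ofReal_ne_top_iff_integrable (by fun_prop) (ae_of_all _ fun ω => sq_nonneg _)).1
      (h.trans_lt ENNReal.ofReal_lt_top).ne

lemma integral_abs_le_sqrt_of_lintegral_sq_le {P : Measure Ω} [IsProbabilityMeasure P]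
    {R : Ω → ℝ} (hR : AEStronglyMeasurable R P) {c : ℝ} (hc : 0 ≤ c)
    (h : ∫⁻ ω, ENNReal.ofReal (R ω ^ 2) ∂P ≤ ENNReal.ofReal c) :
    ∫ ω, |R ω| ∂P ≤ √c := by
  have hL2 := (memLp_two_of_lintegral_sq_le hR h).abs
  have hsq : ∫ ω, R ω ^ 2 ∂P ≤ c := by
    rw [integral_eq_lintegral_of_nonneg_ae (ae_of_all _ fun ω => sq_nonneg _) (by fun_prop)]
    exact ENNReal.toReal_le_of_le_ofReal hc h
  have hjensen : (∫ ω, |R ω| ∂P) ^ 2 ≤ ∫ ω, R ω ^ 2 ∂P := by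
    have := variance_nonneg |R| P
    rw [variance_eq_sub hL2] at this
    simpa [Pi.pow_apply, sq_abs] using this
  exact (le_abs_self _).trans (Real.abs_le_sqrt (hjensen.trans hsq))

lemma gaussianPDFReal_le_inv_sqrt (m : ℝ) (v : ℝ≥0) (x : ℝ) :
    gaussianPDFReal m v x ≤ (√(2 * Real.pi * v))⁻¹ :=
  mul_le_of_le_one_right (by positivity) <| Real.exp_le_one_iff.2 <|
    div_nonpos_of_nonpos_of_nonneg (neg_nonpos.2 (sq_nonneg _)) (by positivity)

lemma gaussianReal_real_Ico_le (m : ℝ) {v : ℝ≥0} (hv : v ≠ 0) {a b : ℝ} (hab : a ≤ b) :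
    (gaussianReal m v).real (Set.Ico a b) ≤ (b - a) / √(2 * Real.pi * v) := by
  rw [measureReal_def, gaussianReal_apply_eq_integral m hv,
    ENNReal.toReal_ofReal (setIntegral_nonneg measurableSet_Ico fun x _ =>
      gaussianPDFReal_nonneg m v x)]
  have h := norm_setIntegral_le_of_norm_le_const (μ := volume) (s := Set.Ico a b)
    (f := gaussianPDFReal m v) (by simp) fun x _ => by
      rw [Real.norm_of_nonneg (gaussianPDFReal_nonneg m v x)]
      exact gaussianPDFReal_le_inv_sqrt m v x
  rw [Real.volume_real_Ico_of_le hab] at h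
  rw [div_eq_mul_inv, mul_comm]
  exact (le_abs_self _).trans h

lemma abs_sub_gaussianReal_real_Ici_le (m : ℝ) {v : ℝ≥0} (hv : v ≠ 0) (a b : ℝ) :
    |(gaussianReal m v).real (Set.Ici a) - (gaussianReal m v).real (Set.Ici b)|
      ≤ |a - b| / √(2 * Real.pi * v) := by
  wlog hab : a ≤ b generalizing a b
  · rw [abs_sub_comm, abs_sub_comm a]
    exact this b a (le_of_not_ge hab)
  rw [← measureReal_sdiff (Set.Ici_subset_Ici.2 hab) measurableSet_Ici, Set.Ici_sdiff_Ici,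
    abs_of_nonneg measureReal_nonneg, abs_sub_comm, abs_of_nonneg (sub_nonneg.2 hab)]
  exact gaussianReal_real_Ico_le m hv hab

lemma measureReal_le_add_eq_integral_of_indepFun {P : Measure Ω} [IsProbabilityMeasure P]
    {Z W : Ω → ℝ} {μ : Measure ℝ} (hZ : HasLaw Z μ P) (hW : Measurable W)
    (hind : IndepFun Z W P) (x : ℝ) :
    P.real {ω | x ≤ Z ω + W ω} = ∫ ω, μ.real (Set.Ici (x - W ω)) ∂P := by
  have : IsProbabilityMeasure μ := hZ.isProbabilityMeasure_iff.1 inferInstance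
  have hmap := (indepFun_iff_map_prod_eq_prod_map_map hZ.aemeasurable hW.aemeasurable).1 hind
  have hs : MeasurableSet {p : ℝ × ℝ | x ≤ p.1 + p.2} :=
    measurableSet_le (by fun_prop) (by fun_prop)
  have hsection (w : ℝ) : (fun z => (z, w)) ⁻¹' {p : ℝ × ℝ | x ≤ p.1 + p.2} = Set.Ici (x - w) := by
    ext z
    simp
  have hμ_meas : Measurable fun w => μ (Set.Ici (x - w)) :=
    (Antitone.measurable fun y y' h => measure_mono (Set.Ici_subset_Ici.2 h)).comp
      (measurable_const.sub measurable_id)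
  calc P.real {ω | x ≤ Z ω + W ω}
      = ((μ.prod (P.map W)) {p : ℝ × ℝ | x ≤ p.1 + p.2}).toReal := by
        rw [← hZ.map_eq, ← hmap, Measure.map_apply_of_aemeasurable (by fun_prop) hs]
        rfl
    _ = (∫⁻ ω, μ (Set.Ici (x - W ω)) ∂P).toReal := by
        rw [Measure.prod_apply_symm hs]
        simp_rw [hsection]
        rw [lintegral_map hμ_meas hW]
    _ = ∫ ω, μ.real (Set.Ici (x - W ω)) ∂P :=
        (integral_toReal (hμ_meas.comp hW).aemeasurable
          (ae_of_all _ fun _ => measure_lt_top _ _)).symm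

theorem abs_sub_measureReal_le_gaussian_add_le {P : Measure Ω} [IsProbabilityMeasure P]
    {Z W₁ W₂ : Ω → ℝ} {m : ℝ} {v : ℝ≥0} (hv : v ≠ 0) (hZ : HasLaw Z (gaussianReal m v) P)
    (hW₁ : Measurable W₁) (hW₂ : Measurable W₂) (h₁ : IndepFun Z W₁ P) (h₂ : IndepFun Z W₂ P)
    (hint : Integrable (fun ω => W₁ ω - W₂ ω) P) (x : ℝ) :
    |P.real {ω | x ≤ Z ω + W₁ ω} - P.real {ω | x ≤ Z ω + W₂ ω}|
      ≤ (∫ ω, |W₁ ω - W₂ ω| ∂P) / √(2 * Real.pi * v) := by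
  set g : ℝ → ℝ := fun y => (gaussianReal m v).real (Set.Ici y)
  have hg_int {W : Ω → ℝ} (hW : Measurable W) : Integrable (fun ω => g (x - W ω)) P := by
    have hg : Measurable g := Antitone.measurable fun y y' h =>
      measureReal_mono (Set.Ici_subset_Ici.2 h)
    refine Integrable.of_bound (hg.comp (measurable_const.sub hW)).aestronglyMeasurable 1
      (ae_of_all _ fun ω => ?_)
    rw [Real.norm_of_nonneg measureReal_nonneg]
    exact measureReal_le_one
  rw [measureReal_le_add_eq_integral_of_indepFun hZ hW₁ h₁,
    measureReal_le_add_eq_integral_of_indepFun hZ hW₂ h₂,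
    ← integral_sub (hg_int hW₁) (hg_int hW₂), ← integral_div]
  refine abs_integral_le_integral_abs.trans <|
    integral_mono (hg_int hW₁ |>.sub (hg_int hW₂)).abs (hint.abs.div_const _) fun ω => ?_
  have h := abs_sub_gaussianReal_real_Ici_le m hv (x - W₁ ω) (x - W₂ ω)
  rwa [show x - W₁ ω - (x - W₂ ω) = -(W₁ ω - W₂ ω) by ring, abs_neg] at h

lemma IsStdBrownian.hasLaw {P : Measure Ω} {W : ℝ → Ω → ℝ} (hW : IsStdBrownian P W) {t : ℝ}
    (ht : 0 ≤ t) : HasLaw (W t) (gaussianReal 0 t.toNNReal) P := by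
  have hincr : HasLaw (fun ω => W t ω - W 0 ω) (gaussianReal 0 t.toNNReal) P :=
    ⟨((hW.meas t).sub (hW.meas 0)).aemeasurable, by simpa using hW.gauss 0 t le_rfl ht⟩
  refine hincr.congr ?_
  filter_upwards [hW.init] with ω h0
  simp [h0]

theorem cdf_bound_with_diffusion_general
    {Ω : Type*} [MeasurableSpace Ω] (P : Measure Ω) [IsProbabilityMeasure P]
    (b : ℝ) (ν : Measure ℝ) (hν : IsLevyMeasure ν)
    (X : ℝ → Ω → ℝ) (Xe : ℝ → ℝ → Ω → ℝ)
    (hX : IsLevyProcess P X)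
    (hXe : ∀ ε ∈ Set.Ioc (0:ℝ) 1, IsLevyProcess P (Xe ε))
    (hRchar : ∀ ε ∈ Set.Ioc (0:ℝ) 1,
      HasCharExponent P (fun s ω => X s ω - Xe ε s ω) (smallExponent ν ε))
    (hb : 0 < b)
    (B : ℝ → Ω → ℝ) (hB : IsStdBrownian P B)
    (t : ℝ) (ht : 0 < t)
    (hBindep : ∀ ε ∈ Set.Ioc (0:ℝ) 1,
      IndepFun (fun ω => b * B t ω)
        (fun ω => (Xe ε t ω - b * B t ω, X t ω - Xe ε t ω)) P) :
    ∀ ε ∈ Set.Ioc (0:ℝ) 1, ∀ x : ℝ,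
      |(P {ω | x ≤ X t ω}).toReal - (P {ω | x ≤ Xe ε t ω}).toReal|
        ≤ sigmaFn ν ε / (Real.sqrt (2 * Real.pi) * b) := by
  intro ε hε x
  have hXe_meas := (hXe ε hε).meas t
  have hR : Measurable fun ω => X t ω - Xe ε t ω := (hX.meas t).sub hXe_meas
  have hR2 := lintegral_sq_le_of_integral_exp_eq_smallExponent hν hε.2 hR ht.le
    (hRchar ε hε t ht.le)
  have hZ := gaussianReal_const_mul (hB.hasLaw ht.le) b
  have hv : NNReal.mk (b ^ 2) (sq_nonneg b) * t.toNNReal ≠ 0 :=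
    mul_ne_zero (ne_of_gt (NNReal.coe_pos.1 (pow_pos hb 2))) (by simpa using ht)
  have hV : Measurable fun ω => Xe ε t ω - b * B t ω := hXe_meas.sub ((hB.meas t).const_mul b)
  have hsmooth := abs_sub_measureReal_le_gaussian_add_le hv hZ
    (W₁ := fun ω => (Xe ε t ω - b * B t ω) + (X t ω - Xe ε t ω)) (hV.add hR) hV
    ((hBindep ε hε).comp measurable_id (measurable_fst.add measurable_snd))
    ((hBindep ε hε).comp measurable_id measurable_fst)
    (((memLp_two_of_lintegral_sq_le hR.aestronglyMeasurable hR2).integrable one_le_two).congr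
      (ae_of_all _ fun ω => by ring)) x
  simp only [sub_add_sub_cancel', add_sub_cancel, sub_sub_sub_cancel_right] at hsmooth
  have hL1 := integral_abs_le_sqrt_of_lintegral_sq_le hR.aestronglyMeasurable (by positivity) hR2
  have hsqrt : √(2 * Real.pi * ↑(NNReal.mk (b ^ 2) (sq_nonneg b) * t.toNNReal))
      = √(2 * Real.pi) * b * √t := by
    rw [NNReal.coe_mul, NNReal.coe_mk, Real.coe_toNNReal _ ht.le, ← mul_assoc,
      Real.sqrt_mul (by positivity), Real.sqrt_mul (by positivity), Real.sqrt_sq hb.le]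
  rw [← measureReal_def, ← measureReal_def]
  calc _ ≤ _ := hsmooth
    _ ≤ √(t * sigmaFn ν ε ^ 2) / (√(2 * Real.pi) * b * √t) := by rw [hsqrt]; gcongr
    _ = sigmaFn ν ε / (√(2 * Real.pi) * b) := by
        have hσ : 0 ≤ sigmaFn ν ε := Real.sqrt_nonneg _
        rw [Real.sqrt_mul ht.le, Real.sqrt_sq hσ]
        field_simp [(Real.sqrt_pos.2 ht).ne']

/-- Proposition 5, part 1: uniform bound for the cdf's when `b > 0`. -/
theorem cdf_bound_with_diffusion
    {Ω : Type*} [MeasurableSpace Ω] (P : Measure Ω) [IsProbabilityMeasure P]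
    (γ b : ℝ) (hb0 : 0 ≤ b) (ν : Measure ℝ) (hν : IsLevyMeasure ν)
    (X : ℝ → Ω → ℝ) (Xe : ℝ → ℝ → Ω → ℝ)
    (hX : IsLevyProcess P X)
    (hXchar : HasCharExponent P X (levyExponent γ b ν))
    (hXe : ∀ ε ∈ Set.Ioc (0:ℝ) 1, IsLevyProcess P (Xe ε))
    (hXechar : ∀ ε ∈ Set.Ioc (0:ℝ) 1, HasCharExponent P (Xe ε) (truncExponent γ b ν ε))
    (hRchar : ∀ ε ∈ Set.Ioc (0:ℝ) 1,
      HasCharExponent P (fun s ω => X s ω - Xe ε s ω) (smallExponent ν ε))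
    (hIndep : ∀ ε ∈ Set.Ioc (0:ℝ) 1,
      IndepFun (fun ω => fun s : ℝ => Xe ε s ω) (fun ω => fun s : ℝ => X s ω - Xe ε s ω) P)
    (hb : 0 < b)
    (B : ℝ → Ω → ℝ) (hB : IsStdBrownian P B)
    (t : ℝ) (ht : 0 < t)
    (hBindep : ∀ ε ∈ Set.Ioc (0:ℝ) 1,
      IndepFun (fun ω => b * B t ω)
        (fun ω => (Xe ε t ω - b * B t ω, X t ω - Xe ε t ω)) P) :
    ∀ ε ∈ Set.Ioc (0:ℝ) 1, ∀ x : ℝ,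
      |(P {ω | x ≤ X t ω}).toReal - (P {ω | x ≤ Xe ε t ω}).toReal|
        ≤ sigmaFn ν ε / (Real.sqrt (2 * Real.pi) * b) :=
  cdf_bound_with_diffusion_general P b ν hν X Xe hX hXe hRchar hb B hB t ht hBindep

end LevyApprox
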